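/- Additivity of the tumula information (Theorem 2(b)): Let A₁, B₁, A₂, B₂ be nonempty finite types, ρ a bipartite state on A₁ × B₁, and ρ' a bipartite state on A₂ × B₂. Let Π denote the state on (A₁ × A₂) × (B₁ × B₂) obtained from the Kronecker product ρ ⊗ ρ' (a matrix indexed by (A₁ × B₁) × (A₂ × B₂)) by reindexing along the bijection (A₁ × A₂) × (B₁ × B₂) ≃ (A₁ × B₁) × (A₂ × B₂). Then the infimum over states σ on A₁ × A₂ and τ on B₁ × B₂ of D(σ ⊗ τ ‖ Π) equals T(A₁:B₁)_ρ + T(A₂:B₂)_{ρ'}, as an equality in [0,+∞]. -/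

import Mathlib

open scoped BigOperators Kronecker ComplexOrder

noncomputable section

/-- Matrix power on the support via spectral decomposition (convention `0 ^ p = 0`);
junk value `0` for non-Hermitian matrices. -/
noncomputable def mpow {A : Type*} [Fintype A] [DecidableEq A] (X : Matrix A A ℂ) (p : ℝ) :
    Matrix A A ℂ :=
  if h : X.IsHermitian then
    (h.eigenvectorUnitary : Matrix A A ℂ) *
      Matrix.diagonal (fun i =>
        ((if h.eigenvalues i = 0 then (0 : ℝ) else (h.eigenvalues i) ^ p : ℝ) : ℂ)) *
      (star (h.eigenvectorUnitary : Matrix A A ℂ))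
  else 0

/-- Matrix logarithm via spectral decomposition (`Real.log 0 = 0`); junk value `0`
for non-Hermitian matrices. -/
noncomputable def mlog {A : Type*} [Fintype A] [DecidableEq A] (X : Matrix A A ℂ) :
    Matrix A A ℂ :=
  if h : X.IsHermitian then
    (h.eigenvectorUnitary : Matrix A A ℂ) *
      Matrix.diagonal (fun i => ((Real.log (h.eigenvalues i) : ℝ) : ℂ)) *
      (star (h.eigenvectorUnitary : Matrix A A ℂ))
  else 0

/-- A quantum state: a positive semidefinite matrix with unit trace. -/
structure MState (A : Type*) [Fintype A] [DecidableEq A] where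
  mat : Matrix A A ℂ
  posSemidef : mat.PosSemidef
  trace_one : mat.trace = 1

/-- `Q_α(ρ‖σ) = Tr[ρ^α σ^(1-α)]`. -/
noncomputable def QRenyi {A : Type*} [Fintype A] [DecidableEq A] (α : ℝ)
    (ρ σ : Matrix A A ℂ) : ℝ :=
  ((mpow ρ α * mpow σ (1 - α)).trace).re

/-- Petz Rényi divergence `D_α(ρ‖σ)`, valued in `(-∞,∞]`. -/
noncomputable def DRenyi {A : Type*} [Fintype A] [DecidableEq A] (α : ℝ)
    (ρ σ : Matrix A A ℂ) : EReal :=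
  if QRenyi α ρ σ = 0 then ⊤ else (((α - 1)⁻¹ * Real.log (QRenyi α ρ σ) : ℝ) : EReal)

-- Quantum relative entropy `D(ρ‖σ)`, valued in `(-∞,∞]`.
open Classical in
noncomputable def relEnt {A : Type*} [Fintype A] [DecidableEq A] (ρ σ : Matrix A A ℂ) : EReal :=
  if LinearMap.ker (Matrix.toLin' σ) ≤ LinearMap.ker (Matrix.toLin' ρ) then
    (((ρ * (mlog ρ - mlog σ)).trace).re : EReal)
  else ⊤

/-- Doubly minimized Petz Rényi lautum information. -/
noncomputable def Ldd {A B : Type*} [Fintype A] [DecidableEq A] [Fintype B] [DecidableEq B]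
    (α : ℝ) (ρ : Matrix (A × B) (A × B) ℂ) : EReal :=
  ⨅ (σ : MState A) (τ : MState B), DRenyi α (σ.mat ⊗ₖ τ.mat) ρ

/-- Tumula information. -/
noncomputable def Tum {A B : Type*} [Fintype A] [DecidableEq A] [Fintype B] [DecidableEq B]
    (ρ : Matrix (A × B) (A × B) ℂ) : EReal :=
  ⨅ (σ : MState A) (τ : MState B), relEnt (σ.mat ⊗ₖ τ.mat) ρ

/-- Partial trace over the first factor. -/
noncomputable def ptrA {A B : Type*} [Fintype A] (M : Matrix (A × B) (A × B) ℂ) :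
    Matrix B B ℂ :=
  Matrix.of fun b b' => ∑ a, M (a, b) (a, b')

/-- Partial trace over the second factor. -/
noncomputable def ptrB {A B : Type*} [Fintype B] (M : Matrix (A × B) (A × B) ℂ) :
    Matrix A A ℂ :=
  Matrix.of fun a a' => ∑ b, M (a, b) (a', b)

/-!
For `≤`, take product states `σ₁ ⊗ σ₂` and `τ₁ ⊗ τ₂`: after regrouping the factors, relative
entropy is additive on tensor products, `D(P ⊗ Q ‖ R ⊗ S) = D(P ‖ R) + D(Q ‖ S)`.

For `≥`, regroup an arbitrary `σ ⊗ τ` into a state `ω` on `(A₁ × B₁) × (A₂ × B₂)`. Its marginals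
`ω₁, ω₂` are again product states `σ_{A₁} ⊗ τ_{B₁}` and `σ_{A₂} ⊗ τ_{B₂}`, and relative entropy is
superadditive against a product second argument: `D(ω₁ ‖ R) + D(ω₂ ‖ S) ≤ D(ω ‖ R ⊗ S)`. This is
subadditivity of the von Neumann entropy, i.e. Klein's inequality `D(ω ‖ ω₁ ⊗ ω₂) ≥ 0`.

Both directions rest on `log (R ⊗ S)` agreeing with `log R ⊗ 1 + 1 ⊗ log S` on the support of
`R ⊗ S`, computed in the product eigenbasis.
-/

open Matrix

section FunctionalCalculus

variable {n : Type*} [Fintype n] [DecidableEq n]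

lemma isHermitian_unitary_conj_diagonal (U : Matrix n n ℂ) (d : n → ℝ) :
    (U * diagonal (fun i => (d i : ℂ)) * star U).IsHermitian := by
  simp [IsHermitian, star_eq_conjTranspose, conjTranspose_mul, mul_assoc, Pi.star_def]

lemma aeval_unitary_conj_diagonal {U : Matrix n n ℂ} (hU : U ∈ unitary (Matrix n n ℂ))
    (d : n → ℝ) (p : Polynomial ℝ) :
    Polynomial.aeval (U * diagonal (fun i => (d i : ℂ)) * star U) p =
      U * diagonal (fun i => ((p.eval (d i) : ℝ) : ℂ)) * star U := by
  have hdiag : Polynomial.aeval (fun i => (d i : ℂ)) p = fun i => ((p.eval (d i) : ℝ) : ℂ) := by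
    rw [Polynomial.aeval_pi_apply]
    funext i
    rw [← Complex.coe_algebraMap, Polynomial.aeval_algebraMap_apply_eq_algebraMap_eval]
  calc Polynomial.aeval (U * diagonal (fun i => (d i : ℂ)) * star U) p
      = Unitary.conjStarAlgAut ℝ (Matrix n n ℂ) ⟨U, hU⟩
          (Polynomial.aeval (diagonalAlgHom ℝ (fun i => (d i : ℂ))) p) :=
        Polynomial.aeval_algHom_apply
          (Unitary.conjStarAlgAut ℝ (Matrix n n ℂ) ⟨U, hU⟩).toAlgEquiv.toAlgHom _ p
    _ = _ := by rw [Polynomial.aeval_algHom_apply, hdiag]; rfl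

lemma cfc_unitary_conj_diagonal (f : ℝ → ℝ) {U : Matrix n n ℂ}
    (hU : U ∈ unitary (Matrix n n ℂ)) (d : n → ℝ) :
    cfc f (U * diagonal (fun i => (d i : ℂ)) * star U) =
      U * diagonal (fun i => (f (d i) : ℂ)) * star U := by
  have hX := isHermitian_unitary_conj_diagonal U d
  obtain ⟨p, hp⟩ : ∃ p : Polynomial ℝ, ∀ x ∈ Finset.univ.image d ∪ Finset.univ.image
      hX.eigenvalues, p.eval x = f x :=
    ⟨Lagrange.interpolate _ id f, fun x hx => by
      simpa using Lagrange.eval_interpolate_at_node (v := id) (r := f) (Set.injOn_id _) hx⟩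
  have hspec : Set.EqOn f p.eval (spectrum ℝ (U * diagonal (fun i => (d i : ℂ)) * star U)) := by
    rw [hX.spectrum_real_eq_range_eigenvalues]
    rintro _ ⟨i, rfl⟩
    exact (hp _ (by simp)).symm
  rw [cfc_congr hspec]
  refine (cfc_polynomial p _ hX).trans ?_
  rw [aeval_unitary_conj_diagonal hU]
  simp only [hp _ (by simp : d _ ∈ _)]

lemma mlog_eq_cfc {M : Matrix n n ℂ} (hM : M.IsHermitian) : mlog M = cfc Real.log M := by
  rw [hM.cfc_eq, mlog, dif_pos hM]
  rfl

lemma mlog_unitary_conj_diagonal {U : Matrix n n ℂ} (hU : U ∈ unitary (Matrix n n ℂ))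
    (d : n → ℝ) :
    mlog (U * diagonal (fun i => (d i : ℂ)) * star U) =
      U * diagonal (fun i => (Real.log (d i) : ℂ)) * star U := by
  rw [mlog_eq_cfc (isHermitian_unitary_conj_diagonal U d), cfc_unitary_conj_diagonal _ hU]

end FunctionalCalculus

section UnitaryDiagonalization

variable {n : Type*} [Fintype n] [DecidableEq n]

lemma Matrix.IsHermitian.eq_unitary_conj_diagonal {M : Matrix n n ℂ} (hM : M.IsHermitian) :
    M = (hM.eigenvectorUnitary : Matrix n n ℂ) * diagonal (fun i => (hM.eigenvalues i : ℂ)) *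
      star (hM.eigenvectorUnitary : Matrix n n ℂ) :=
  hM.spectral_theorem

lemma Matrix.IsHermitian.mlog_eq {M : Matrix n n ℂ} (hM : M.IsHermitian) :
    mlog M = (hM.eigenvectorUnitary : Matrix n n ℂ) *
      diagonal (fun i => (Real.log (hM.eigenvalues i) : ℂ)) *
      star (hM.eigenvectorUnitary : Matrix n n ℂ) := by
  rw [mlog, dif_pos hM]

lemma unitary_conj_diagonal_mulVec_col {W : Matrix n n ℂ} (hW : W ∈ unitary (Matrix n n ℂ))
    (d : n → ℂ) (k : n) : (W * diagonal d * star W) *ᵥ Wᵀ k = d k • Wᵀ k := by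
  have hcol : Wᵀ k = W *ᵥ Pi.single k 1 := by
    ext i; simp [mulVec_single]
  rw [hcol, mulVec_mulVec, mul_assoc, mul_assoc, Unitary.star_mul_self_of_mem hW, mul_one,
    ← mulVec_mulVec, mulVec_single, ← mulVec_smul]
  congr 1
  ext i
  simp [Pi.single_apply, eq_comm]

lemma trace_mul_unitary_conj_diagonal (M W : Matrix n n ℂ) (d : n → ℂ) :
    (M * (W * diagonal d * star W)).trace = ∑ k, d k * (star (Wᵀ k) ⬝ᵥ M *ᵥ Wᵀ k) := by
  rw [← mul_assoc, ← mul_assoc, trace_mul_cycle, ← mul_assoc, trace_mul_comm]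
  simp only [trace, diag_apply, diagonal_mul]
  refine Finset.sum_congr rfl fun k _ => congrArg _ ?_
  simp only [mul_apply, dotProduct, mulVec, Finset.sum_mul, Finset.mul_sum, star_apply,
    transpose_apply, Pi.star_apply, mul_assoc]
  exact Finset.sum_comm

lemma mulVec_eq_zero_of_unitary_conj_diagonal {W : Matrix n n ℂ}
    (hW : W ∈ unitary (Matrix n n ℂ)) {d : n → ℂ} {T : Matrix n n ℂ}
    (hT : ∀ k, d k = 0 → T *ᵥ Wᵀ k = 0) {x : n → ℂ}
    (hx : (W * diagonal d * star W) *ᵥ x = 0) : T *ᵥ x = 0 := by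
  set y := star W *ᵥ x
  have hxy : x = ∑ k, y k • Wᵀ k := by
    rw [← Matrix.one_mulVec x, ← Unitary.mul_star_self_of_mem hW, ← mulVec_mulVec,
      mulVec_eq_sum]
    simp [y]
  have hdy : ∀ k, d k * y k = 0 := by
    intro k
    have := congrArg (star W *ᵥ ·) hx
    simp only [mulVec_mulVec, mulVec_zero] at this
    rw [← mul_assoc, ← mul_assoc, Unitary.star_mul_self_of_mem hW, one_mul,
      ← mulVec_mulVec] at this
    simpa [mulVec_diagonal] using congrFun this k
  rw [hxy, mulVec_sum]
  refine Finset.sum_eq_zero fun k _ => ?_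
  rcases mul_eq_zero.mp (hdy k) with hd | hy
  · rw [mulVec_smul, hT k hd, smul_zero]
  · rw [hy, zero_smul, mulVec_zero]

lemma Matrix.IsHermitian.mulVec_eigenvectorUnitary_col {M : Matrix n n ℂ} (hM : M.IsHermitian)
    (i : n) :
    M *ᵥ (hM.eigenvectorUnitary : Matrix n n ℂ)ᵀ i =
      (hM.eigenvalues i : ℂ) • (hM.eigenvectorUnitary : Matrix n n ℂ)ᵀ i := by
  nth_rewrite 1 [hM.eq_unitary_conj_diagonal]
  exact unitary_conj_diagonal_mulVec_col (SetLike.coe_mem _) _ i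

end UnitaryDiagonalization

section Kronecker

variable {A B : Type*}

def kronVec (u : A → ℂ) (w : B → ℂ) : A × B → ℂ := fun p => u p.1 * w p.2

@[simp]
lemma kronVec_zero_left (w : B → ℂ) : kronVec (0 : A → ℂ) w = 0 := by
  ext; simp [kronVec]

@[simp]
lemma kronVec_zero_right (u : A → ℂ) : kronVec u (0 : B → ℂ) = 0 := by
  ext; simp [kronVec]

lemma kronVec_eq_sum_single_right [Fintype B] [DecidableEq B] (u : A → ℂ) (w : B → ℂ) :
    kronVec u w = ∑ b, w b • kronVec u (Pi.single b 1) := by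
  ext ⟨a, b⟩
  simp [kronVec, Pi.single_apply, mul_comm]

variable [Fintype A] [Fintype B]

lemma kronecker_mulVec_kronVec (M : Matrix A A ℂ) (N : Matrix B B ℂ) (u : A → ℂ) (w : B → ℂ) :
    (M ⊗ₖ N) *ᵥ kronVec u w = kronVec (M *ᵥ u) (N *ᵥ w) := by
  ext ⟨a, b⟩
  simp only [mulVec, dotProduct, kronVec, kroneckerMap_apply, Fintype.sum_prod_type,
    Finset.sum_mul_sum]
  exact Finset.sum_congr rfl fun _ _ => Finset.sum_congr rfl fun _ _ => by ring

variable [DecidableEq A] [DecidableEq B]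

lemma unitary_conj_diagonal_kronecker (U : Matrix A A ℂ) (V : Matrix B B ℂ) (d : A → ℂ)
    (e : B → ℂ) :
    (U * diagonal d * star U) ⊗ₖ (V * diagonal e * star V) =
      (U ⊗ₖ V) * diagonal (fun p => d p.1 * e p.2) * star (U ⊗ₖ V) := by
  rw [mul_kronecker_mul, mul_kronecker_mul, diagonal_kronecker_diagonal, star_eq_conjTranspose,
    star_eq_conjTranspose, star_eq_conjTranspose, conjTranspose_kronecker]

lemma mulVec_eq_zero_of_kronecker_mulVec_eq_zero {R : Matrix A A ℂ} {S : Matrix B B ℂ}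
    (hR : R.IsHermitian) (hS : S.IsHermitian) {T : Matrix (A × B) (A × B) ℂ}
    (hT₁ : ∀ u w, R *ᵥ u = 0 → T *ᵥ kronVec u w = 0)
    (hT₂ : ∀ u w, S *ᵥ w = 0 → T *ᵥ kronVec u w = 0)
    {x : A × B → ℂ} (hx : (R ⊗ₖ S) *ᵥ x = 0) : T *ᵥ x = 0 := by
  rw [hR.eq_unitary_conj_diagonal, hS.eq_unitary_conj_diagonal,
    unitary_conj_diagonal_kronecker] at hx
  refine mulVec_eq_zero_of_unitary_conj_diagonal
    (kronecker_mem_unitary (SetLike.coe_mem _) (SetLike.coe_mem _)) (fun ⟨i, j⟩ hij => ?_) hx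
  rcases mul_eq_zero.mp hij with h | h
  · exact hT₁ ((hR.eigenvectorUnitary : Matrix A A ℂ)ᵀ i) _ <| by
      rw [hR.mulVec_eigenvectorUnitary_col, show (hR.eigenvalues i : ℂ) = 0 from h, zero_smul]
  · exact hT₂ _ ((hS.eigenvectorUnitary : Matrix B B ℂ)ᵀ j) <| by
      rw [hS.mulVec_eigenvectorUnitary_col, show (hS.eigenvalues j : ℂ) = 0 from h, zero_smul]

end Kronecker

section PartialTrace

variable {A B : Type*}

lemma ptrA_eq_ptrB_submatrix_swap [Fintype A] (ω : Matrix (A × B) (A × B) ℂ) :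
    ptrA ω = ptrB (ω.submatrix Prod.swap Prod.swap) :=
  rfl

lemma ptrB_kronecker [Fintype B] (M : Matrix A A ℂ) (N : Matrix B B ℂ) :
    ptrB (M ⊗ₖ N) = N.trace • M := by
  ext a a'
  simp [ptrB, trace, ← Finset.mul_sum, mul_comm]

lemma ptrA_kronecker [Fintype A] (M : Matrix A A ℂ) (N : Matrix B B ℂ) :
    ptrA (M ⊗ₖ N) = M.trace • N := by
  ext b b'
  simp [ptrA, trace, ← Finset.sum_mul]

lemma posSemidef_ptrB [Fintype B] {ω : Matrix (A × B) (A × B) ℂ} (hω : ω.PosSemidef) :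
    (ptrB ω).PosSemidef := by
  have : ptrB ω = ∑ b, ω.submatrix (fun a => (a, b)) (fun a => (a, b)) := by
    ext; simp [ptrB, Matrix.sum_apply]
  rw [this]
  exact posSemidef_sum _ fun b _ => hω.submatrix _

lemma posSemidef_ptrA [Fintype A] {ω : Matrix (A × B) (A × B) ℂ} (hω : ω.PosSemidef) :
    (ptrA ω).PosSemidef :=
  posSemidef_ptrB (hω.submatrix Prod.swap)

variable [Fintype A] [Fintype B]

lemma trace_ptrB (ω : Matrix (A × B) (A × B) ℂ) : (ptrB ω).trace = ω.trace := by
  simp only [ptrB, trace, diag_apply, of_apply, Fintype.sum_prod_type]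

lemma trace_ptrA (ω : Matrix (A × B) (A × B) ℂ) : (ptrA ω).trace = ω.trace := by
  simp only [ptrA, trace, diag_apply, of_apply, Fintype.sum_prod_type]
  exact Finset.sum_comm

lemma submatrix_swap_mulVec_kronVec (ω : Matrix (A × B) (A × B) ℂ) (u : A → ℂ) (w : B → ℂ) :
    ω.submatrix Prod.swap Prod.swap *ᵥ kronVec w u = (ω *ᵥ kronVec u w) ∘ Prod.swap := by
  ext ⟨b, a⟩
  simp only [mulVec, dotProduct, submatrix_apply, kronVec, Function.comp_apply,
    Fintype.sum_prod_type, Prod.swap_prod_mk, mul_comm (w _)]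
  exact Finset.sum_comm

lemma ptrB_mulVec_apply [DecidableEq B] (ω : Matrix (A × B) (A × B) ℂ) (u : A → ℂ) (a : A) :
    (ptrB ω *ᵥ u) a = ∑ b, (ω *ᵥ kronVec u (Pi.single b 1)) (a, b) := by
  simp only [mulVec, dotProduct, ptrB, of_apply, Finset.sum_mul, kronVec, Pi.single_apply, mul_ite,
    mul_one, mul_zero, Fintype.sum_prod_type, Finset.sum_ite_eq', Finset.mem_univ, ↓reduceIte]
  exact Finset.sum_comm

lemma dotProduct_ptrB_mulVec [DecidableEq B] (ω : Matrix (A × B) (A × B) ℂ) (u : A → ℂ) :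
    star u ⬝ᵥ ptrB ω *ᵥ u =
      ∑ b, star (kronVec u (Pi.single b 1)) ⬝ᵥ ω *ᵥ kronVec u (Pi.single b 1) := by
  simp only [dotProduct, ptrB_mulVec_apply, Finset.mul_sum]
  rw [Finset.sum_comm]
  simp [kronVec, Fintype.sum_prod_type, Pi.single_apply, apply_ite (starRingEnd ℂ), ite_mul]

lemma ptrB_mulVec_eq_zero [DecidableEq B] {ω : Matrix (A × B) (A × B) ℂ} {u : A → ℂ}
    (h : ∀ b, ω *ᵥ kronVec u (Pi.single b 1) = 0) : ptrB ω *ᵥ u = 0 := by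
  ext a
  simp [ptrB_mulVec_apply, h]

lemma Matrix.PosSemidef.mulVec_kronVec_eq_zero_of_ptrB [DecidableEq B]
    {ω : Matrix (A × B) (A × B) ℂ}
    (hω : ω.PosSemidef) {u : A → ℂ} (hu : ptrB ω *ᵥ u = 0) (w : B → ℂ) :
    ω *ᵥ kronVec u w = 0 := by
  have hsum := dotProduct_ptrB_mulVec ω u
  rw [hu, dotProduct_zero, eq_comm,
    Finset.sum_eq_zero_iff_of_nonneg fun b _ => hω.dotProduct_mulVec_nonneg _] at hsum
  rw [kronVec_eq_sum_single_right, mulVec_sum]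
  refine Finset.sum_eq_zero fun b _ => ?_
  rw [mulVec_smul, (hω.dotProduct_mulVec_zero_iff _).mp (hsum b (Finset.mem_univ b)), smul_zero]

lemma ptrA_mulVec_eq_zero [DecidableEq A] {ω : Matrix (A × B) (A × B) ℂ} {w : B → ℂ}
    (h : ∀ a, ω *ᵥ kronVec (Pi.single a 1) w = 0) : ptrA ω *ᵥ w = 0 := by
  rw [ptrA_eq_ptrB_submatrix_swap]
  refine ptrB_mulVec_eq_zero fun a => ?_
  rw [submatrix_swap_mulVec_kronVec, h a]
  rfl

lemma Matrix.PosSemidef.mulVec_kronVec_eq_zero_of_ptrA [DecidableEq A]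
    {ω : Matrix (A × B) (A × B) ℂ} (hω : ω.PosSemidef) {w : B → ℂ} (hw : ptrA ω *ᵥ w = 0)
    (u : A → ℂ) : ω *ᵥ kronVec u w = 0 := by
  have h := (hω.submatrix Prod.swap).mulVec_kronVec_eq_zero_of_ptrB hw u
  rw [submatrix_swap_mulVec_kronVec] at h
  ext p
  simpa using congrFun h p.swap

lemma trace_mul_kronecker_one [DecidableEq B] (ω : Matrix (A × B) (A × B) ℂ)
    (M : Matrix A A ℂ) : (ω * (M ⊗ₖ (1 : Matrix B B ℂ))).trace = (ptrB ω * M).trace := by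
  simp only [trace, diag_apply, mul_apply, kroneckerMap_apply, one_apply, mul_ite, mul_one,
    mul_zero, Fintype.sum_prod_type, Finset.sum_ite_eq', Finset.mem_univ, ↓reduceIte, ptrB,
    of_apply, Finset.sum_mul]
  exact Finset.sum_congr rfl fun _ _ => Finset.sum_comm

lemma trace_mul_one_kronecker [DecidableEq A] (ω : Matrix (A × B) (A × B) ℂ)
    (M : Matrix B B ℂ) : (ω * ((1 : Matrix A A ℂ) ⊗ₖ M)).trace = (ptrA ω * M).trace := by
  simp only [trace, diag_apply, mul_apply, kroneckerMap_apply, one_apply, ite_mul, one_mul,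
    zero_mul, mul_ite, mul_zero, Fintype.sum_prod_type, Finset.sum_ite_irrel, Finset.sum_const_zero,
    Finset.sum_ite_eq', Finset.mem_univ, ↓reduceIte, ptrA, of_apply, Finset.sum_mul]
  rw [Finset.sum_comm]
  exact Finset.sum_congr rfl fun _ _ => Finset.sum_comm

end PartialTrace

section LogKronecker

variable {A B : Type*} [Fintype A] [DecidableEq A] [Fintype B] [DecidableEq B]

lemma trace_mul_mlog_kronecker {P : Matrix A A ℂ} {Q : Matrix B B ℂ} (hP : P.IsHermitian)
    (hQ : Q.IsHermitian) (ω : Matrix (A × B) (A × B) ℂ)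
    (hker : ∀ x, (P ⊗ₖ Q) *ᵥ x = 0 → ω *ᵥ x = 0) :
    (ω * mlog (P ⊗ₖ Q)).trace = (ptrB ω * mlog P).trace + (ptrA ω * mlog Q).trace := by
  set U := (hP.eigenvectorUnitary : Matrix A A ℂ)
  set V := (hQ.eigenvectorUnitary : Matrix B B ℂ)
  set r := hP.eigenvalues
  set s := hQ.eigenvalues
  have hW : U ⊗ₖ V ∈ unitary (Matrix (A × B) (A × B) ℂ) :=
    kronecker_mem_unitary (SetLike.coe_mem _) (SetLike.coe_mem _)
  have hPQ : P ⊗ₖ Q = (U ⊗ₖ V) * diagonal (fun p => ((r p.1 * s p.2 : ℝ) : ℂ)) *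
      star (U ⊗ₖ V) := by
    conv_lhs => rw [hP.eq_unitary_conj_diagonal, hQ.eq_unitary_conj_diagonal]
    simp only [unitary_conj_diagonal_kronecker, Complex.ofReal_mul]
    rfl
  have hsplit : mlog P ⊗ₖ 1 + 1 ⊗ₖ mlog Q = (U ⊗ₖ V) *
      diagonal (fun p => ((Real.log (r p.1) + Real.log (s p.2) : ℝ) : ℂ)) * star (U ⊗ₖ V) := by
    have hU : (1 : Matrix A A ℂ) = U * diagonal (fun _ => 1) * star U := by
      rw [diagonal_one, mul_one, Unitary.mul_star_self_of_mem (SetLike.coe_mem _)]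
    have hV : (1 : Matrix B B ℂ) = V * diagonal (fun _ => 1) * star V := by
      rw [diagonal_one, mul_one, Unitary.mul_star_self_of_mem (SetLike.coe_mem _)]
    rw [hP.mlog_eq, hQ.mlog_eq, hU, hV, unitary_conj_diagonal_kronecker,
      unitary_conj_diagonal_kronecker, ← add_mul, ← mul_add, diagonal_add]
    simp only [mul_one, one_mul, Complex.ofReal_add]
    rfl
  rw [← trace_mul_kronecker_one, ← trace_mul_one_kronecker, ← trace_add, ← mul_add, hsplit, hPQ,
    mlog_unitary_conj_diagonal hW, trace_mul_unitary_conj_diagonal,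
    trace_mul_unitary_conj_diagonal]
  refine Finset.sum_congr rfl fun ⟨i, j⟩ _ => ?_
  -- `log (r * s) = log r + log s` fails only when `r * s = 0`, where `hker` kills the weight.
  by_cases h : r i * s j = 0
  · have hω : ω *ᵥ (U ⊗ₖ V)ᵀ (i, j) = 0 :=
      hker _ (by rw [hPQ, unitary_conj_diagonal_mulVec_col hW]; simp [h])
    simp [hω]
  · rw [Real.log_mul (left_ne_zero_of_mul h) (right_ne_zero_of_mul h)]

end LogKronecker

section Klein

lemma sub_le_mul_log_sub_mul_log {r s : ℝ} (hr : 0 ≤ r) (hs : 0 < s) :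
    r - s ≤ r * Real.log r - r * Real.log s := by
  rcases hr.eq_or_lt with rfl | hr
  · simpa using hs.le
  have h := Real.self_sub_one_le_mul_log (div_pos hr hs).le
  rw [Real.log_div hr.ne' hs.ne', div_sub_one hs.ne', div_mul_eq_mul_div,
    div_le_div_iff_of_pos_right hs] at h
  linarith

variable {n : Type*} [Fintype n] [DecidableEq n]

lemma sum_normSq_apply_left_eq_one {C : Matrix n n ℂ} (hC : C ∈ unitary (Matrix n n ℂ))
    (j : n) : ∑ i, Complex.normSq (C i j) = 1 := by
  have h : (star C * C) j j = 1 := by rw [Unitary.star_mul_self_of_mem hC, one_apply_eq]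
  simp only [mul_apply, star_apply, Complex.star_def, ← Complex.normSq_eq_conj_mul_self] at h
  exact_mod_cast h

lemma sum_normSq_apply_right_eq_one {C : Matrix n n ℂ} (hC : C ∈ unitary (Matrix n n ℂ))
    (i : n) : ∑ j, Complex.normSq (C i j) = 1 := by
  have h : (C * star C) i i = 1 := by rw [Unitary.mul_star_self_of_mem hC, one_apply_eq]
  simp only [mul_apply, star_apply, Complex.star_def, Complex.mul_conj] at h
  exact_mod_cast h

lemma dotProduct_unitary_conj_diagonal_mulVec (U : Matrix n n ℂ) (d : n → ℂ) (x : n → ℂ) :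
    star x ⬝ᵥ (U * diagonal d * star U) *ᵥ x =
      ∑ i, d i * Complex.normSq ((star U *ᵥ x) i) := by
  have h : star x ᵥ* U = star (star U *ᵥ x) := by
    rw [star_mulVec, star_eq_conjTranspose, conjTranspose_conjTranspose]
  rw [← mulVec_mulVec, ← mulVec_mulVec, dotProduct_mulVec, h]
  simp only [dotProduct, mulVec_diagonal, Pi.star_apply, Complex.normSq_eq_conj_mul_self]
  exact Finset.sum_congr rfl fun _ _ => by rw [Complex.star_def]; ring

lemma Matrix.IsHermitian.dotProduct_mulVec_eq_sum {M : Matrix n n ℂ} (hM : M.IsHermitian)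
    (x : n → ℂ) : star x ⬝ᵥ M *ᵥ x = ∑ i, (hM.eigenvalues i : ℂ) *
      Complex.normSq ((star (hM.eigenvectorUnitary : Matrix n n ℂ) *ᵥ x) i) := by
  conv_lhs => rw [hM.eq_unitary_conj_diagonal]
  exact dotProduct_unitary_conj_diagonal_mulVec _ _ x

lemma trace_mul_mlog_eq_sum {ρ σ : Matrix n n ℂ} (hρ : ρ.IsHermitian) (hσ : σ.IsHermitian) :
    (ρ * mlog σ).trace = ((∑ j, ∑ i, hρ.eigenvalues i * Real.log (hσ.eigenvalues j) *
      Complex.normSq ((star (hρ.eigenvectorUnitary : Matrix n n ℂ) *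
        hσ.eigenvectorUnitary) i j) : ℝ) : ℂ) := by
  push_cast
  rw [hσ.mlog_eq, trace_mul_unitary_conj_diagonal]
  refine Finset.sum_congr rfl fun j _ => ?_
  rw [hρ.dotProduct_mulVec_eq_sum, Finset.mul_sum]
  refine Finset.sum_congr rfl fun i _ => ?_
  rw [show (star (hρ.eigenvectorUnitary : Matrix n n ℂ) *ᵥ
      (hσ.eigenvectorUnitary : Matrix n n ℂ)ᵀ j) i
    = (star (hρ.eigenvectorUnitary : Matrix n n ℂ) * hσ.eigenvectorUnitary) i j from rfl]
  ring

lemma trace_mul_mlog_self_eq_sum {ρ : Matrix n n ℂ} (hρ : ρ.IsHermitian) :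
    (ρ * mlog ρ).trace = ((∑ i, hρ.eigenvalues i * Real.log (hρ.eigenvalues i) : ℝ) : ℂ) := by
  rw [trace_mul_mlog_eq_sum hρ hρ, Unitary.star_mul_self_of_mem (SetLike.coe_mem _)]
  simp [one_apply, apply_ite Complex.normSq]

lemma eigenvalues_mul_normSq_eq_zero_of_ker_le {ρ σ : Matrix n n ℂ} (hρ : ρ.PosSemidef)
    (hσ : σ.IsHermitian) (hker : ∀ x, σ *ᵥ x = 0 → ρ *ᵥ x = 0) {j : n}
    (hs : hσ.eigenvalues j = 0) (i : n) :
    hρ.1.eigenvalues i * Complex.normSq ((star (hρ.1.eigenvectorUnitary : Matrix n n ℂ) *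
      hσ.eigenvectorUnitary) i j) = 0 := by
  have hσw : σ *ᵥ (hσ.eigenvectorUnitary : Matrix n n ℂ)ᵀ j = 0 := by
    rw [hσ.mulVec_eigenvectorUnitary_col, hs, Complex.ofReal_zero, zero_smul]
  have h := hρ.1.dotProduct_mulVec_eq_sum ((hσ.eigenvectorUnitary : Matrix n n ℂ)ᵀ j)
  rw [hker _ hσw, dotProduct_zero] at h
  have h' : ∑ i, hρ.1.eigenvalues i * Complex.normSq ((star (hρ.1.eigenvectorUnitary :
      Matrix n n ℂ) * hσ.eigenvectorUnitary) i j) = 0 := by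
    exact_mod_cast h.symm
  exact (Finset.sum_eq_zero_iff_of_nonneg fun i _ => mul_nonneg (hρ.eigenvalues_nonneg i)
    (Complex.normSq_nonneg _)).mp h' i (Finset.mem_univ i)

/-- Klein's inequality. In eigenbases `ρ = ∑ rᵢ |uᵢ⟩⟨uᵢ|`, `σ = ∑ sⱼ |wⱼ⟩⟨wⱼ|` both sides are
averages over the doubly stochastic weights `|⟨uᵢ, wⱼ⟩|²`, and termwise `r - s ≤ r log r - r log s`;
the kernel hypothesis makes the weights vanish where `sⱼ = 0`. -/
lemma re_trace_sub_le_re_trace_mul_mlog_sub {ρ σ : Matrix n n ℂ} (hρ : ρ.PosSemidef)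
    (hσ : σ.PosSemidef) (hker : ∀ x, σ *ᵥ x = 0 → ρ *ᵥ x = 0) :
    ρ.trace.re - σ.trace.re ≤ (ρ * (mlog ρ - mlog σ)).trace.re := by
  rw [mul_sub, trace_sub, Complex.sub_re, trace_mul_mlog_self_eq_sum hρ.1,
    trace_mul_mlog_eq_sum hρ.1 hσ.1, hρ.1.trace_eq_sum_eigenvalues, hσ.1.trace_eq_sum_eigenvalues]
  simp only [Complex.re_sum, Complex.ofReal_re]
  set r := hρ.1.eigenvalues
  set s := hσ.1.eigenvalues
  set C := star (hρ.1.eigenvectorUnitary : Matrix n n ℂ) * hσ.1.eigenvectorUnitary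
  have hC : C ∈ unitary (Matrix n n ℂ) :=
    Submonoid.mul_mem _ (Unitary.star_mem (SetLike.coe_mem _)) (SetLike.coe_mem _)
  have hker' : ∀ i j, s j = 0 → r i * Complex.normSq (C i j) = 0 := fun i j hs =>
    eigenvalues_mul_normSq_eq_zero_of_ker_le hρ hσ.1 hker hs i
  have hrow := sum_normSq_apply_right_eq_one hC
  have hcol := sum_normSq_apply_left_eq_one hC
  have hr : ∑ i, r i = ∑ j, ∑ i, Complex.normSq (C i j) * r i := by
    rw [Finset.sum_comm]; simp [← Finset.sum_mul, hrow]
  have hs : ∑ j, s j = ∑ j, ∑ i, Complex.normSq (C i j) * s j := by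
    simp [← Finset.sum_mul, hcol]
  have hrr : ∑ i, r i * Real.log (r i) =
      ∑ j, ∑ i, Complex.normSq (C i j) * (r i * Real.log (r i)) := by
    rw [Finset.sum_comm]; simp [← Finset.sum_mul, hrow]
  calc ∑ i, r i - ∑ j, s j
      = ∑ j, ∑ i, Complex.normSq (C i j) * (r i - s j) := by
        simp only [hr, hs, mul_sub, Finset.sum_sub_distrib]
    _ ≤ ∑ j, ∑ i, Complex.normSq (C i j) * (r i * Real.log (r i) - r i * Real.log (s j)) := by
        refine Finset.sum_le_sum fun j _ => Finset.sum_le_sum fun i _ => ?_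
        rcases (hσ.eigenvalues_nonneg j).eq_or_lt with hs0 | hs0
        · have hsj : s j = 0 := hs0.symm
          have h := hker' i j hsj
          rw [hsj, Real.log_zero, mul_zero, sub_zero, sub_zero, ← mul_assoc, mul_comm _ (r i), h,
            zero_mul]
        · exact mul_le_mul_of_nonneg_left
            (sub_le_mul_log_sub_mul_log (hρ.eigenvalues_nonneg i) hs0) (Complex.normSq_nonneg _)
    _ = _ := by
        simp only [hrr, mul_sub, Finset.sum_sub_distrib]
        congr 1
        exact Finset.sum_congr rfl fun j _ => Finset.sum_congr rfl fun i _ => by ring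

end Klein

section Reindex

variable {n m : Type*} [Fintype n] [Fintype m]

lemma trace_reindex (e : n ≃ m) (M : Matrix n n ℂ) : (reindex e e M).trace = M.trace := by
  simpa [trace, reindex_apply] using e.symm.sum_comp (fun i => M i i)

lemma reindex_mulVec_eq_zero_iff (e : n ≃ m) (M : Matrix n n ℂ) (x : m → ℂ) :
    reindex e e M *ᵥ x = 0 ↔ M *ᵥ (x ∘ e) = 0 := by
  rw [reindex_apply, submatrix_mulVec_equiv, Equiv.symm_symm]
  refine ⟨fun h => funext fun i => by simpa using congrFun h (e i), fun h => by rw [h]; rfl⟩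

variable [DecidableEq n] [DecidableEq m] (e : n ≃ m)

lemma reindex_unitary_conj_diagonal (U : Matrix n n ℂ) (d : n → ℂ) :
    reindex e e (U * diagonal d * star U) =
      reindex e e U * diagonal (fun i => d (e.symm i)) * star (reindex e e U) := by
  rw [reindex_apply, reindex_apply, ← submatrix_mul_equiv _ _ _ e.symm,
    ← submatrix_mul_equiv _ _ _ e.symm, submatrix_diagonal_equiv, star_eq_conjTranspose,
    star_eq_conjTranspose, conjTranspose_submatrix]
  rfl

lemma reindex_mem_unitary {U : Matrix n n ℂ} (hU : U ∈ unitary (Matrix n n ℂ)) :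
    reindex e e U ∈ unitary (Matrix m m ℂ) := by
  have hstar : star (reindex e e U) = reindex e e (star U) := by
    simp only [reindex_apply, star_eq_conjTranspose, conjTranspose_submatrix]
  rw [Unitary.mem_iff, hstar, reindex_apply, reindex_apply, submatrix_mul_equiv,
    submatrix_mul_equiv, Unitary.star_mul_self_of_mem hU, Unitary.mul_star_self_of_mem hU,
    submatrix_one_equiv, and_self]

lemma mlog_reindex (M : Matrix n n ℂ) : mlog (reindex e e M) = reindex e e (mlog M) := by
  by_cases hM : M.IsHermitian
  · rw [hM.eq_unitary_conj_diagonal, reindex_unitary_conj_diagonal,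
      mlog_unitary_conj_diagonal (reindex_mem_unitary e (SetLike.coe_mem _)),
      mlog_unitary_conj_diagonal (SetLike.coe_mem _), reindex_unitary_conj_diagonal]
  · simp [mlog, hM]

end Reindex

section RelativeEntropy

variable {n : Type*} [Fintype n] [DecidableEq n]

lemma relEnt_of_ker_le {ρ σ : Matrix n n ℂ} (h : ∀ x, σ *ᵥ x = 0 → ρ *ᵥ x = 0) :
    relEnt ρ σ = ((ρ * (mlog ρ - mlog σ)).trace.re : EReal) :=
  if_pos fun x hx => by simpa using h x (by simpa using hx)

lemma relEnt_of_not_ker_le {ρ σ : Matrix n n ℂ} (h : ¬ ∀ x, σ *ᵥ x = 0 → ρ *ᵥ x = 0) :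
    relEnt ρ σ = ⊤ :=
  if_neg fun hle => h fun x hx => by simpa using hle (by simpa using hx)

lemma relEnt_ne_bot (ρ σ : Matrix n n ℂ) : relEnt ρ σ ≠ ⊥ := by
  unfold relEnt
  split_ifs <;> simp

lemma relEnt_nonneg {ρ σ : Matrix n n ℂ} (hρ : ρ.PosSemidef) (hσ : σ.PosSemidef)
    (htr : σ.trace.re ≤ ρ.trace.re) : 0 ≤ relEnt ρ σ := by
  by_cases h : ∀ x, σ *ᵥ x = 0 → ρ *ᵥ x = 0
  · rw [relEnt_of_ker_le h, EReal.coe_nonneg]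
    linarith [re_trace_sub_le_re_trace_mul_mlog_sub hρ hσ h]
  · rw [relEnt_of_not_ker_le h]
    exact le_top

lemma relEnt_reindex {m : Type*} [Fintype m] [DecidableEq m] (e : n ≃ m) (M N : Matrix n n ℂ) :
    relEnt (reindex e e M) (reindex e e N) = relEnt M N := by
  have hker : (∀ x, reindex e e N *ᵥ x = 0 → reindex e e M *ᵥ x = 0) ↔
      ∀ y, N *ᵥ y = 0 → M *ᵥ y = 0 := by
    simp only [reindex_mulVec_eq_zero_iff]
    exact ⟨fun h y => by simpa [Function.comp_assoc] using h (y ∘ e.symm), fun h x => h (x ∘ e)⟩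
  by_cases h : ∀ y, N *ᵥ y = 0 → M *ᵥ y = 0
  · have hsub : reindex e e (mlog M) - reindex e e (mlog N) = reindex e e (mlog M - mlog N) := rfl
    rw [relEnt_of_ker_le h, relEnt_of_ker_le (hker.mpr h), mlog_reindex, mlog_reindex, hsub,
      reindex_apply, reindex_apply, submatrix_mul_equiv, ← reindex_apply, trace_reindex]
  · rw [relEnt_of_not_ker_le h, relEnt_of_not_ker_le (hker.not.mpr h)]

lemma relEnt_reindex_right {m : Type*} [Fintype m] [DecidableEq m] (e : n ≃ m)
    (M : Matrix m m ℂ) (N : Matrix n n ℂ) :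
    relEnt M (reindex e e N) = relEnt (reindex e.symm e.symm M) N := by
  rw [← relEnt_reindex e, ← reindex_symm, Equiv.apply_symm_apply]

end RelativeEntropy

section Additivity

variable {A B : Type*} [Fintype A] [DecidableEq A] [Fintype B] [DecidableEq B]

lemma re_trace_mul_mlog_ptrB_add_ptrA_le {ω : Matrix (A × B) (A × B) ℂ} (hω : ω.PosSemidef)
    (hωt : ω.trace = 1) :
    (ptrB ω * mlog (ptrB ω)).trace.re + (ptrA ω * mlog (ptrA ω)).trace.re ≤
      (ω * mlog ω).trace.re := by
  have hker : ∀ x, (ptrB ω ⊗ₖ ptrA ω) *ᵥ x = 0 → ω *ᵥ x = 0 := fun x =>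
    mulVec_eq_zero_of_kronecker_mulVec_eq_zero (posSemidef_ptrB hω).1 (posSemidef_ptrA hω).1
      (fun _ w hu => hω.mulVec_kronVec_eq_zero_of_ptrB hu w)
      (fun u _ hw => hω.mulVec_kronVec_eq_zero_of_ptrA hw u)
  have hklein := re_trace_sub_le_re_trace_mul_mlog_sub hω
    ((posSemidef_ptrB hω).kronecker (posSemidef_ptrA hω)) hker
  rw [trace_kronecker, trace_ptrB, trace_ptrA, hωt, mul_sub, trace_sub,
    trace_mul_mlog_kronecker (posSemidef_ptrB hω).1 (posSemidef_ptrA hω).1 ω hker] at hklein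
  simp only [mul_one, sub_self, Complex.sub_re, Complex.add_re] at hklein
  linarith

lemma relEnt_ptrB_add_relEnt_ptrA_le {ω : Matrix (A × B) (A × B) ℂ} (hω : ω.PosSemidef)
    (hωt : ω.trace = 1) {R : Matrix A A ℂ} {S : Matrix B B ℂ} (hR : R.IsHermitian)
    (hS : S.IsHermitian) : relEnt (ptrB ω) R + relEnt (ptrA ω) S ≤ relEnt ω (R ⊗ₖ S) := by
  by_cases hker : ∀ x, (R ⊗ₖ S) *ᵥ x = 0 → ω *ᵥ x = 0
  · have hkerR : ∀ u, R *ᵥ u = 0 → ptrB ω *ᵥ u = 0 := fun u hu =>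
      ptrB_mulVec_eq_zero fun b => hker _ (by rw [kronecker_mulVec_kronVec, hu, kronVec_zero_left])
    have hkerS : ∀ w, S *ᵥ w = 0 → ptrA ω *ᵥ w = 0 := fun w hw =>
      ptrA_mulVec_eq_zero fun a => hker _ (by rw [kronecker_mulVec_kronVec, hw, kronVec_zero_right])
    rw [relEnt_of_ker_le hker, relEnt_of_ker_le hkerR, relEnt_of_ker_le hkerS, ← EReal.coe_add,
      EReal.coe_le_coe_iff]
    have hsub := re_trace_mul_mlog_ptrB_add_ptrA_le hω hωt
    simp only [mul_sub, trace_sub, Complex.sub_re, trace_mul_mlog_kronecker hR hS ω hker,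
      Complex.add_re]
    linarith
  · rw [relEnt_of_not_ker_le hker]
    exact le_top

lemma relEnt_kronecker {P R : Matrix A A ℂ} {Q S : Matrix B B ℂ} (hP : P.PosSemidef)
    (hQ : Q.PosSemidef) (hR : R.IsHermitian) (hS : S.IsHermitian) (hPt : P.trace = 1)
    (hQt : Q.trace = 1) : relEnt (P ⊗ₖ Q) (R ⊗ₖ S) = relEnt P R + relEnt Q S := by
  refine le_antisymm ?_ ?_
  · by_cases hkerR : ∀ x, R *ᵥ x = 0 → P *ᵥ x = 0
    · by_cases hkerS : ∀ x, S *ᵥ x = 0 → Q *ᵥ x = 0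
      · have hker : ∀ x, (R ⊗ₖ S) *ᵥ x = 0 → (P ⊗ₖ Q) *ᵥ x = 0 := fun x =>
          mulVec_eq_zero_of_kronecker_mulVec_eq_zero hR hS
            (fun u w hu => by rw [kronecker_mulVec_kronVec, hkerR u hu, kronVec_zero_left])
            (fun u w hw => by rw [kronecker_mulVec_kronVec, hkerS w hw, kronVec_zero_right])
        rw [relEnt_of_ker_le hker, relEnt_of_ker_le hkerR, relEnt_of_ker_le hkerS,
          ← EReal.coe_add, EReal.coe_le_coe_iff]
        simp only [mul_sub, trace_sub, Complex.sub_re,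
          trace_mul_mlog_kronecker hP.1 hQ.1 _ fun x hx => hx,
          trace_mul_mlog_kronecker hR hS _ hker,
          ptrB_kronecker, ptrA_kronecker, hPt, hQt, one_smul, Complex.add_re]
        linarith
      · rw [relEnt_of_not_ker_le hkerS, EReal.add_top_of_ne_bot (relEnt_ne_bot _ _)]
        exact le_top
    · rw [relEnt_of_not_ker_le hkerR, EReal.top_add_of_ne_bot (relEnt_ne_bot _ _)]
      exact le_top
  · have h := relEnt_ptrB_add_relEnt_ptrA_le (hP.kronecker hQ)
      (by rw [trace_kronecker, hPt, hQt, one_mul]) hR hS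
    rwa [ptrB_kronecker, ptrA_kronecker, hPt, hQt, one_smul, one_smul] at h

end Additivity

lemma EReal.coe_iInf_toENNReal_le {ι : Sort*} {f : ι → EReal} (hf : ∀ i, 0 ≤ f i) :
    ((⨅ i, (f i).toENNReal : ENNReal) : EReal) ≤ iInf f :=
  le_iInf fun i => (EReal.coe_ennreal_le_coe_ennreal_iff.mpr (iInf_le _ i)).trans_eq
    (EReal.coe_toENNReal (hf i))

lemma EReal.le_iInf_add_iInf {ι κ : Sort*} {f : ι → EReal} {g : κ → EReal} (hf : ∀ i, 0 ≤ f i)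
    (hg : ∀ k, 0 ≤ g k) {a : EReal} (h : ∀ i k, a ≤ f i + g k) : a ≤ iInf f + iInf g := by
  calc a ≤ (a.toENNReal : EReal) := by rw [EReal.coe_toENNReal_eq_max]; exact le_max_right _ _
    _ ≤ (((⨅ i, (f i).toENNReal) + ⨅ k, (g k).toENNReal : ENNReal) : EReal) := by
      refine EReal.coe_ennreal_le_coe_ennreal_iff.mpr (ENNReal.le_iInf_add_iInf fun i k => ?_)
      rw [← EReal.toENNReal_add (hf i) (hg k)]
      exact EReal.toENNReal_le_toENNReal (h i k)
    _ ≤ iInf f + iInf g := by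
      rw [EReal.coe_ennreal_add]
      exact add_le_add (EReal.coe_iInf_toENNReal_le hf) (EReal.coe_iInf_toENNReal_le hg)

lemma EReal.le_iInf₂_add_iInf₂ {ι ι' κ κ' : Sort*} {f : ι → ι' → EReal} {g : κ → κ' → EReal}
    (hf : ∀ i i', 0 ≤ f i i') (hg : ∀ k k', 0 ≤ g k k') {a : EReal}
    (h : ∀ i i' k k', a ≤ f i i' + g k k') : a ≤ (⨅ (i) (i'), f i i') + ⨅ (k) (k'), g k k' :=
  EReal.le_iInf_add_iInf (fun i => le_iInf (hf i)) (fun k => le_iInf (hg k)) fun i k =>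
    EReal.le_iInf_add_iInf (hf i) (hg k) (h i · k ·)

namespace MState

variable {A B : Type*} [Fintype A] [DecidableEq A] [Fintype B] [DecidableEq B]

def kron (σ : MState A) (τ : MState B) : MState (A × B) where
  mat := σ.mat ⊗ₖ τ.mat
  posSemidef := σ.posSemidef.kronecker τ.posSemidef
  trace_one := by rw [trace_kronecker, σ.trace_one, τ.trace_one, one_mul]

def marginalA (ω : MState (A × B)) : MState A where
  mat := _root_.ptrB ω.mat
  posSemidef := posSemidef_ptrB ω.posSemidef
  trace_one := by rw [trace_ptrB, ω.trace_one]

def marginalB (ω : MState (A × B)) : MState B where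
  mat := _root_.ptrA ω.mat
  posSemidef := posSemidef_ptrA ω.posSemidef
  trace_one := by rw [trace_ptrA, ω.trace_one]

lemma relEnt_nonneg (ρ σ : MState A) : 0 ≤ relEnt ρ.mat σ.mat :=
  _root_.relEnt_nonneg ρ.posSemidef σ.posSemidef (by rw [ρ.trace_one, σ.trace_one])

end MState

section Shuffle

variable {A₁ B₁ A₂ B₂ : Type*}

lemma reindex_prodProdProdComm_symm_kronecker (σ₁ : Matrix A₁ A₁ ℂ) (σ₂ : Matrix A₂ A₂ ℂ)
    (τ₁ : Matrix B₁ B₁ ℂ) (τ₂ : Matrix B₂ B₂ ℂ) :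
    reindex (Equiv.prodProdProdComm A₁ B₁ A₂ B₂).symm (Equiv.prodProdProdComm A₁ B₁ A₂ B₂).symm
      ((σ₁ ⊗ₖ σ₂) ⊗ₖ (τ₁ ⊗ₖ τ₂)) = (σ₁ ⊗ₖ τ₁) ⊗ₖ (σ₂ ⊗ₖ τ₂) := by
  ext ⟨⟨_, _⟩, _, _⟩ ⟨⟨_, _⟩, _, _⟩
  simp only [reindex_apply, submatrix_apply, kroneckerMap_apply, Equiv.symm_symm,
    Equiv.prodProdProdComm_apply]
  ring

lemma ptrB_reindex_prodProdProdComm_symm [Fintype A₂] [Fintype B₂]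
    (σ : Matrix (A₁ × A₂) (A₁ × A₂) ℂ) (τ : Matrix (B₁ × B₂) (B₁ × B₂) ℂ) :
    ptrB (reindex (Equiv.prodProdProdComm A₁ B₁ A₂ B₂).symm
      (Equiv.prodProdProdComm A₁ B₁ A₂ B₂).symm (σ ⊗ₖ τ)) = ptrB σ ⊗ₖ ptrB τ := by
  ext ⟨_, _⟩ ⟨_, _⟩
  simp only [ptrB, of_apply, reindex_apply, submatrix_apply, kroneckerMap_apply,
    Fintype.sum_prod_type, Equiv.symm_symm, Equiv.prodProdProdComm_apply, Finset.sum_mul_sum]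

lemma ptrA_reindex_prodProdProdComm_symm [Fintype A₁] [Fintype B₁]
    (σ : Matrix (A₁ × A₂) (A₁ × A₂) ℂ) (τ : Matrix (B₁ × B₂) (B₁ × B₂) ℂ) :
    ptrA (reindex (Equiv.prodProdProdComm A₁ B₁ A₂ B₂).symm
      (Equiv.prodProdProdComm A₁ B₁ A₂ B₂).symm (σ ⊗ₖ τ)) = ptrA σ ⊗ₖ ptrA τ := by
  ext ⟨_, _⟩ ⟨_, _⟩
  simp only [ptrA, of_apply, reindex_apply, submatrix_apply, kroneckerMap_apply,
    Fintype.sum_prod_type, Equiv.symm_symm, Equiv.prodProdProdComm_apply, Finset.sum_mul_sum]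

end Shuffle

theorem tumula_additive_general {A₁ B₁ A₂ B₂ : Type*}
    [Fintype A₁] [DecidableEq A₁] [Fintype B₁] [DecidableEq B₁]
    [Fintype A₂] [DecidableEq A₂] [Fintype B₂] [DecidableEq B₂]
    (ρ : MState (A₁ × B₁)) (ρ' : MState (A₂ × B₂)) :
    (⨅ (σ : MState (A₁ × A₂)) (τ : MState (B₁ × B₂)),
        relEnt (σ.mat ⊗ₖ τ.mat)
          (Matrix.reindex (Equiv.prodProdProdComm A₁ B₁ A₂ B₂)
            (Equiv.prodProdProdComm A₁ B₁ A₂ B₂) (ρ.mat ⊗ₖ ρ'.mat)))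
      = Tum ρ.mat + Tum ρ'.mat := by
  set e := Equiv.prodProdProdComm A₁ B₁ A₂ B₂
  refine le_antisymm ?_ (le_iInf₂ fun σ τ => ?_)
  · refine EReal.le_iInf₂_add_iInf₂ (fun _ _ => MState.relEnt_nonneg (.kron _ _) ρ)
      (fun _ _ => MState.relEnt_nonneg (.kron _ _) ρ') fun σ₁ τ₁ σ₂ τ₂ => ?_
    calc _ ≤ relEnt ((σ₁.kron σ₂).mat ⊗ₖ (τ₁.kron τ₂).mat) (reindex e e (ρ.mat ⊗ₖ ρ'.mat)) :=
          iInf₂_le _ _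
      _ = relEnt ((σ₁.kron τ₁).mat ⊗ₖ (σ₂.kron τ₂).mat) (ρ.mat ⊗ₖ ρ'.mat) := by
          rw [relEnt_reindex_right, MState.kron, MState.kron,
            reindex_prodProdProdComm_symm_kronecker]
          rfl
      _ = _ := relEnt_kronecker (σ₁.kron τ₁).posSemidef (σ₂.kron τ₂).posSemidef
          ρ.posSemidef.1 ρ'.posSemidef.1 (σ₁.kron τ₁).trace_one (σ₂.kron τ₂).trace_one
  · set ω := reindex e.symm e.symm (σ.mat ⊗ₖ τ.mat)
    have hω : ω.PosSemidef := (σ.kron τ).posSemidef.submatrix _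
    have hωt : ω.trace = 1 := (trace_reindex _ _).trans (σ.kron τ).trace_one
    calc Tum ρ.mat + Tum ρ'.mat
        ≤ relEnt (σ.marginalA.kron τ.marginalA).mat ρ.mat +
          relEnt (σ.marginalB.kron τ.marginalB).mat ρ'.mat :=
          add_le_add (iInf₂_le _ _) (iInf₂_le _ _)
      _ = relEnt (ptrB ω) ρ.mat + relEnt (ptrA ω) ρ'.mat := by
          rw [ptrB_reindex_prodProdProdComm_symm, ptrA_reindex_prodProdProdComm_symm]
          rfl
      _ ≤ relEnt ω (ρ.mat ⊗ₖ ρ'.mat) :=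
          relEnt_ptrB_add_relEnt_ptrA_le hω hωt ρ.posSemidef.1 ρ'.posSemidef.1
      _ = _ := (relEnt_reindex_right e _ _).symm

/-- Additivity of the tumula information (Theorem 2(b)). -/
theorem tumula_additive {A₁ B₁ A₂ B₂ : Type*}
    [Fintype A₁] [DecidableEq A₁] [Nonempty A₁] [Fintype B₁] [DecidableEq B₁] [Nonempty B₁]
    [Fintype A₂] [DecidableEq A₂] [Nonempty A₂] [Fintype B₂] [DecidableEq B₂] [Nonempty B₂]
    (ρ : MState (A₁ × B₁)) (ρ' : MState (A₂ × B₂)) :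
    (⨅ (σ : MState (A₁ × A₂)) (τ : MState (B₁ × B₂)),
        relEnt (σ.mat ⊗ₖ τ.mat)
          (Matrix.reindex (Equiv.prodProdProdComm A₁ B₁ A₂ B₂)
            (Equiv.prodProdProdComm A₁ B₁ A₂ B₂) (ρ.mat ⊗ₖ ρ'.mat)))
      = Tum ρ.mat + Tum ρ'.mat :=
  tumula_additive_general ρ ρ'

end
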